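/- Let m ≥ 1 be an integer, C₃ > 0, and let 0 ≤ λ₁ ≤ λ₂ ≤ ⋯ ≤ λ_k ≤ ⋯ be a nondecreasing sequence of nonnegative real numbers such that λ₁ + λ₂ + ⋯ + λ_k ≤ C₃ λ_k^{m/2 + 1} holds for every k ≥ 1. Then for every k ≥ 1, λ_k ≥ C₄ k^{2/m}, where C₄ = min{ λ₁, (m/(C₃(m+2)))^{2/m} }. -/
import Mathlib

lemma sum_rpow_lower (p : ℝ) (hp : 0 < p) (k : ℕ) :
    (k : ℝ) ^ (p + 1) / (p + 1) ≤ ∑ j ∈ Finset.Icc 1 k, (j : ℝ) ^ p := by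
  have hmono : MonotoneOn (fun x : ℝ => x ^ p) (Set.Icc (0:ℝ) (0 + k)) := by
    intro a ha b hb hab
    exact Real.rpow_le_rpow ha.1 hab hp.le
  have h := hmono.integral_le_sum
  rw [integral_rpow (Or.inl (by linarith))] at h
  rw [show Finset.Icc 1 k = Finset.Ico 1 (k+1) by rfl, Finset.sum_Ico_eq_sum_range]
  simp only [zero_add] at h
  rw [Real.zero_rpow (by positivity)] at h
  calc (k : ℝ) ^ (p + 1) / (p + 1) = ((k:ℝ) ^ (p + 1) - 0) / (p + 1) := by ring
    _ ≤ ∑ i ∈ Finset.range k, (↑(i + 1) : ℝ) ^ p := h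
    _ = ∑ i ∈ Finset.range (k + 1 - 1), ((1 + i : ℕ) : ℝ) ^ p := by
        simp only [Nat.add_sub_cancel]
        exact Finset.sum_congr rfl fun i _ => by rw [Nat.add_comm]

set_option maxHeartbeats 1000000 in
/-- **Lemma (Wang–Zhu).**
If `0 ≤ λ₁ ≤ λ₂ ≤ ⋯` is a nondecreasing sequence of nonnegative reals such that
`λ₁ + ⋯ + λ_k ≤ C₃ · λ_k ^ (m/2 + 1)` for every `k ≥ 1`, then
`λ_k ≥ C₄ · k ^ (2/m)` for every `k ≥ 1`, where
`C₄ = min { λ₁, (m / (C₃ (m+2))) ^ (2/m) }`. -/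
theorem stmt_17 (m : ℕ) (hm : 1 ≤ m) (C₃ : ℝ) (hC₃ : 0 < C₃)
    (lam : ℕ → ℝ)
    (hnonneg : ∀ k, 1 ≤ k → 0 ≤ lam k)
    (hmono : ∀ i j, 1 ≤ i → i ≤ j → lam i ≤ lam j)
    (hsum : ∀ k, 1 ≤ k →
      ∑ j ∈ Finset.Icc 1 k, lam j ≤ C₃ * lam k ^ ((m : ℝ) / 2 + 1)) :
    ∀ k, 1 ≤ k →
      lam k ≥ min (lam 1) (((m : ℝ) / (C₃ * ((m : ℝ) + 2))) ^ (2 / (m : ℝ)))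
        * (k : ℝ) ^ (2 / (m : ℝ)) := by
  have hm0 : (0:ℝ) < m := by exact_mod_cast hm
  set p : ℝ := 2 / (m:ℝ) with hpdef
  have hp : 0 < p := by positivity
  set C₄ : ℝ := min (lam 1) (((m : ℝ) / (C₃ * ((m : ℝ) + 2))) ^ p) with hC4def
  intro k
  induction k using Nat.strong_induction_on with
  | _ k IH =>
  intro hk
  by_contra hcon
  push_neg at hcon
  -- hcon : lam k < C₄ * k ^ p
  have hkpos : (0:ℝ) < (k:ℝ) := by exact_mod_cast hk
  have hkp : (0:ℝ) < (k:ℝ) ^ p := Real.rpow_pos_of_pos hkpos p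
  have hC4pos : 0 < C₄ := by
    rcases lt_or_ge 0 C₄ with h | h
    · exact h
    · exact absurd hcon (not_lt.2 (le_trans (mul_nonpos_of_nonpos_of_nonneg h hkp.le)
        (hnonneg k hk)))
  have hLpos : 0 < lam k :=
    lt_of_lt_of_le (lt_of_lt_of_le hC4pos (min_le_left _ _)) (hmono 1 k le_rfl hk)
  obtain ⟨n, rfl⟩ : ∃ n, k = n + 1 := ⟨k - 1, (Nat.succ_pred_eq_of_pos hk).symm⟩
  -- the case k = 1
  rcases Nat.eq_zero_or_pos n with rfl | hn
  · simp only [Nat.cast_one, Real.one_rpow, mul_one, zero_add] at hcon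
    exact absurd hcon (not_lt.2 (min_le_left _ _))
  -- now n ≥ 1
  have hlb : C₄ * (∑ j ∈ Finset.Icc 1 n, (j:ℝ) ^ p) + lam (n+1)
      ≤ ∑ j ∈ Finset.Icc 1 (n+1), lam j := by
    rw [Finset.sum_Icc_succ_top (Nat.le_add_left 1 n) lam, Finset.mul_sum]
    gcongr with j hj
    simp only [Finset.mem_Icc] at hj
    exact IH j (Nat.lt_succ_of_le hj.2) hj.1
  have hub : lam (n+1) ^ ((m:ℝ)/2 + 1) ≤ C₄ ^ ((m:ℝ)/2) * ((n:ℝ)+1) * lam (n+1) := by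
    rw [Real.rpow_add_one hLpos.ne']
    have h1 : lam (n+1) ^ ((m:ℝ)/2) ≤ (C₄ * ((n+1:ℕ):ℝ)^p) ^ ((m:ℝ)/2) :=
      Real.rpow_le_rpow hLpos.le hcon.le (by positivity)
    have h2 : (C₄ * ((n+1:ℕ):ℝ)^p) ^ ((m:ℝ)/2) = C₄ ^ ((m:ℝ)/2) * ((n:ℝ)+1) := by
      rw [Real.mul_rpow hC4pos.le hkp.le, ← Real.rpow_mul hkpos.le,
        show p * ((m:ℝ)/2) = 1 by rw [hpdef]; field_simp, Real.rpow_one]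
      push_cast
      ring
    calc lam (n+1) ^ ((m:ℝ)/2) * lam (n+1)
        ≤ (C₄ * ((n+1:ℕ):ℝ)^p) ^ ((m:ℝ)/2) * lam (n+1) :=
          mul_le_mul_of_nonneg_right h1 hLpos.le
      _ = C₄ ^ ((m:ℝ)/2) * ((n:ℝ)+1) * lam (n+1) := by rw [h2]
  set S : ℝ := ∑ j ∈ Finset.Icc 1 n, (j:ℝ) ^ p with hSdef
  have key : C₄ * S + lam (n+1) ≤ C₃ * C₄ ^ ((m:ℝ)/2) * ((n:ℝ)+1) * lam (n+1) := by
    have := le_trans hlb (hsum (n+1) (Nat.le_add_left 1 n))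
    nlinarith [this, hub]
  have hSpos : 0 < S := by
    rw [hSdef]
    refine Finset.sum_pos (fun j hj => ?_) ⟨1, Finset.mem_Icc.2 ⟨le_rfl, hn⟩⟩
    simp only [Finset.mem_Icc] at hj
    have : (0:ℝ) < j := by exact_mod_cast hj.1
    positivity
  set B : ℝ := C₃ * C₄ ^ ((m:ℝ)/2) * ((n:ℝ)+1) with hBdef
  have key2 : C₄ * S ≤ lam (n+1) * (B - 1) := by nlinarith [key]
  have hB1 : 0 < B - 1 := by nlinarith [key2, hSpos, hC4pos, hLpos]
  have hcon' : lam (n+1) < C₄ * ((n:ℝ)+1) ^ p := by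
    have : ((n+1:ℕ):ℝ) = (n:ℝ)+1 := by push_cast; ring
    rwa [this] at hcon
  have hkp' : (0:ℝ) < ((n:ℝ)+1) ^ p := by
    have : ((n+1:ℕ):ℝ) = (n:ℝ)+1 := by push_cast; ring
    rwa [this] at hkp
  have key3 : C₄ * S < C₄ * ((n:ℝ)+1)^p * (B - 1) :=
    lt_of_le_of_lt key2 (by nlinarith [hcon', hB1])
  have key4 : S + ((n:ℝ)+1)^p < C₃ * C₄ ^ ((m:ℝ)/2) * ((n:ℝ)+1)^(p+1) := by
    have hkp1 : ((n:ℝ)+1)^(p+1) = ((n:ℝ)+1)^p * ((n:ℝ)+1) :=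
      Real.rpow_add_one (by positivity) p
    have h4 : S < ((n:ℝ)+1)^p * (B - 1) := by
      have h5 := key3
      rw [mul_assoc] at h5
      exact (mul_lt_mul_iff_right₀ hC4pos).1 h5
    rw [hBdef] at h4
    rw [hkp1]
    nlinarith [h4, hkp']
  have hint : ((n:ℝ)+1)^(p+1)/(p+1) ≤ S + ((n:ℝ)+1)^p := by
    have h := sum_rpow_lower p hp (n+1)
    rw [Finset.sum_Icc_succ_top (Nat.le_add_left 1 n)] at h
    have hc : ((n+1:ℕ):ℝ) = (n:ℝ)+1 := by push_cast; ring
    rw [hc] at h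
    exact h
  have key5 : 1/(p+1) < C₃ * C₄ ^ ((m:ℝ)/2) := by
    have h := lt_of_le_of_lt hint key4
    have hkpp : (0:ℝ) < ((n:ℝ)+1)^(p+1) := by positivity
    rw [div_lt_iff₀ (by positivity : (0:ℝ) < p+1)] at h
    rw [div_lt_iff₀ (by positivity : (0:ℝ) < p+1)]
    nlinarith [h, hkpp]
  have hmm2 : (m:ℝ)/((m:ℝ)+2) < C₃ * C₄ ^ ((m:ℝ)/2) := by
    have heq : 1/(p+1) = (m:ℝ)/((m:ℝ)+2) := by
      have h6 : p + 1 = ((m:ℝ)+2)/(m:ℝ) := by rw [hpdef]; field_simp; ring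
      rw [h6, one_div_div]
    rwa [heq] at key5
  have hq : (m:ℝ)/(C₃*((m:ℝ)+2)) < C₄ ^ ((m:ℝ)/2) := by
    rw [div_lt_iff₀ (by positivity)]
    rw [div_lt_iff₀ (by positivity)] at hmm2
    nlinarith [hmm2]
  have h1 : ((m:ℝ)/(C₃*((m:ℝ)+2)))^p < (C₄ ^ ((m:ℝ)/2))^p :=
    Real.rpow_lt_rpow (by positivity) hq hp
  have h2 : (C₄ ^ ((m:ℝ)/2))^p = C₄ := by
    rw [← Real.rpow_mul hC4pos.le, show ((m:ℝ)/2) * p = 1 by rw [hpdef]; field_simp,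
      Real.rpow_one]
  rw [h2] at h1
  exact absurd (min_le_right (lam 1) (((m:ℝ)/(C₃*((m:ℝ)+2)))^p)) (not_le.2 h1)
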